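/- Every eigenvalue λ of problem (P) satisfies Re(λ) ≤ 0. -/

import Mathlib

open Set Complex

/-- An eigenpair of problem (P): `w` is a nonzero `C⁴` function on `[0,1]`
satisfying the ODE `w'''' − (γ−η²)w'' + 2λβη w' + λ²w = 0` together with the
boundary conditions `w(0) = w''(0) = 0`, `w''(1) + λκ w'(1) = 0`,
`w'''(1) − (γ−η²) w'(1) = 0`. -/
def IsEigenpairP (β η γ κ : ℝ) (l : ℂ) (w : ℝ → ℂ) : Prop :=
  ContDiff ℝ 4 w ∧ (∃ s ∈ Icc (0:ℝ) 1, w s ≠ 0) ∧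
  (∀ s ∈ Icc (0:ℝ) 1,
    iteratedDeriv 4 w s - ((γ - η^2 : ℝ) : ℂ) * iteratedDeriv 2 w s
      + 2 * l * ((β * η : ℝ) : ℂ) * deriv w s + l^2 * w s = 0) ∧
  w 0 = 0 ∧ iteratedDeriv 2 w 0 = 0 ∧
  iteratedDeriv 2 w 1 + l * ((κ : ℝ) : ℂ) * deriv w 1 = 0 ∧
  iteratedDeriv 3 w 1 - ((γ - η^2 : ℝ) : ℂ) * deriv w 1 = 0

/-- An eigenvalue of problem (P). -/
def IsEigenvalueP (β η γ κ : ℝ) (l : ℂ) : Prop :=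
  ∃ w : ℝ → ℂ, IsEigenpairP β η γ κ l w

/-!
Multiply the equation by `conj w` and integrate over `[0,1]`. Integrating by parts and using the
boundary conditions turns it into a quadratic `a λ² + b λ + c = 0` with `a = ‖w‖² > 0`,
`c = ‖w''‖² + (γ - η²)‖w'‖² ≥ 0` and `b = κ|w'(1)|² + 2βη ∫ w' w̄`, where
`Re ∫ w' w̄ = |w(1)|² / 2` because `w(0) = 0`; so `Re b ≥ 0`. Multiplying such a quadratic by `λ̄`
and taking real parts gives `Re λ · (a|λ|² + c) = -Re b · |λ|² ≤ 0`.
-/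

open MeasureTheory intervalIntegral ComplexConjugate

section IntegrationByParts

variable {f g : ℝ → ℂ}

theorem integral_deriv_mul_conj (hf : ContDiff ℝ 1 f) (hg : ContDiff ℝ 1 g) (a b : ℝ) :
    ∫ x in a..b, deriv f x * conj (g x) =
      f b * conj (g b) - f a * conj (g a) - ∫ x in a..b, f x * conj (deriv g x) := by
  have hgc : ∀ x, HasDerivAt (fun x => conj (g x)) (conj (deriv g x)) x := fun x =>
    (hg.differentiable one_ne_zero x).hasDerivAt.star
  have h := integral_mul_deriv_eq_deriv_mul (a := a) (b := b)
    (fun x _ => (hf.differentiable one_ne_zero x).hasDerivAt) (fun x _ => hgc x)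
    ((hf.continuous_deriv le_rfl).intervalIntegrable a b)
    ((hg.continuous_deriv le_rfl).star.intervalIntegrable a b)
  linear_combination h

theorem integral_mul_conj (f : ℝ → ℂ) (a b : ℝ) :
    ∫ x in a..b, f x * conj (f x) = ((∫ x in a..b, normSq (f x) : ℝ) : ℂ) := by
  simp_rw [mul_conj]
  exact integral_ofReal

theorem two_mul_re_integral_deriv_mul_conj (hf : ContDiff ℝ 1 f) (a b : ℝ) :
    2 * (∫ x in a..b, deriv f x * conj (f x)).re = normSq (f b) - normSq (f a) := by
  have h := integral_deriv_mul_conj hf hf a b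
  have hconj : ∫ x in a..b, f x * conj (deriv f x) =
      conj (∫ x in a..b, deriv f x * conj (f x)) := by
    simp_rw [← intervalIntegral_conj, map_mul, conj_conj, mul_comm]
  rw [hconj, mul_conj, mul_conj] at h
  have := congrArg re h
  simp only [sub_re, ofReal_re, conj_re] at this
  linarith

end IntegrationByParts

section IteratedDeriv

variable {w : ℝ → ℂ}

theorem ContDiff.integral_iteratedDeriv_succ_mul_conj {n : ℕ} (hw : ContDiff ℝ n w) {j k : ℕ}
    (hj : j < n) (hk : k < n) (a b : ℝ) :
    ∫ x in a..b, iteratedDeriv (j + 1) w x * conj (iteratedDeriv k w x) =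
      iteratedDeriv j w b * conj (iteratedDeriv k w b)
        - iteratedDeriv j w a * conj (iteratedDeriv k w a)
        - ∫ x in a..b, iteratedDeriv j w x * conj (iteratedDeriv (k + 1) w x) := by
  have hC1 : ∀ i < n, ContDiff ℝ 1 (iteratedDeriv i w) := fun i hi =>
    (contDiff_nat_succ_iff_contDiff_one_iteratedDeriv.1 (hw.of_le (by exact_mod_cast hi))).2
  simp only [iteratedDeriv_succ]
  exact integral_deriv_mul_conj (hC1 j hj) (hC1 k hk) a b

theorem ContDiff.integral_iteratedDeriv_two_mul_conj {a b : ℝ} (hw : ContDiff ℝ 2 w)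
    (ha : w a = 0) :
    ∫ x in a..b, iteratedDeriv 2 w x * conj (w x) =
      iteratedDeriv 1 w b * conj (w b) - ∫ x in a..b, normSq (iteratedDeriv 1 w x) := by
  have h := hw.integral_iteratedDeriv_succ_mul_conj (j := 1) (k := 0)
    (by norm_num) (by norm_num) a b
  simp only [iteratedDeriv_zero, ha, map_zero, mul_zero, sub_zero, integral_mul_conj] at h
  exact h

theorem ContDiff.integral_iteratedDeriv_four_mul_conj {a b : ℝ} (hw : ContDiff ℝ 4 w)
    (ha : w a = 0) (ha₂ : iteratedDeriv 2 w a = 0) :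
    ∫ x in a..b, iteratedDeriv 4 w x * conj (w x) =
      iteratedDeriv 3 w b * conj (w b) - iteratedDeriv 2 w b * conj (iteratedDeriv 1 w b)
        + ∫ x in a..b, normSq (iteratedDeriv 2 w x) := by
  have h₁ := hw.integral_iteratedDeriv_succ_mul_conj (j := 3) (k := 0)
    (by norm_num) (by norm_num) a b
  have h₂ := hw.integral_iteratedDeriv_succ_mul_conj (j := 2) (k := 1)
    (by norm_num) (by norm_num) a b
  simp only [iteratedDeriv_zero, ha, ha₂, map_zero, mul_zero, zero_mul, sub_zero,
    integral_mul_conj] at h₁ h₂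
  rw [h₁, h₂]
  ring

end IteratedDeriv

theorem Complex.re_nonpos_of_quadratic_eq_zero {a c : ℝ} {b z : ℂ} (ha : 0 < a) (hb : 0 ≤ b.re)
    (hc : 0 ≤ c) (h : a * z ^ 2 + b * z + c = 0) : z.re ≤ 0 := by
  have hre := congrArg re h
  have him := congrArg im h
  simp only [pow_two, add_re, add_im, mul_re, mul_im, ofReal_re, ofReal_im, zero_re,
    zero_im] at hre him
  have key : (a * (z.re ^ 2 + z.im ^ 2) + c) * z.re + b.re * (z.re ^ 2 + z.im ^ 2) = 0 := by
    linear_combination z.re * hre + z.im * him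
  by_contra! hz
  have hpos : 0 < (a * (z.re ^ 2 + z.im ^ 2) + c) * z.re := by positivity
  linarith [mul_nonneg hb (by positivity : 0 ≤ z.re ^ 2 + z.im ^ 2)]

section Eigenpair

variable {β η γ κ : ℝ} {l : ℂ} {w : ℝ → ℂ}

theorem IsEigenpairP.energy_identity (hw : IsEigenpairP β η γ κ l w) :
    ((∫ x in (0:ℝ)..1, normSq (w x) : ℝ) : ℂ) * l ^ 2
      + ((κ * normSq (deriv w 1) : ℝ) + (2 * β * η : ℝ) * ∫ x in (0:ℝ)..1, deriv w x * conj (w x))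
        * l
      + ((∫ x in (0:ℝ)..1, normSq (iteratedDeriv 2 w x))
          + (γ - η ^ 2) * ∫ x in (0:ℝ)..1, normSq (deriv w x) : ℝ) = 0 := by
  obtain ⟨hw4, -, hode, hw0, hw20, hbc1, hbc2⟩ := hw
  simp only [← iteratedDeriv_one] at hode hbc1 hbc2 ⊢
  have hc₀ : Continuous w := hw4.continuous
  have hc₁ := hw4.continuous_iteratedDeriv 1 (by norm_num)
  have hc₂ := hw4.continuous_iteratedDeriv 2 (by norm_num)
  have hc₄ := hw4.continuous_iteratedDeriv 4 le_rfl
  have hzero : ∫ x in (0:ℝ)..1, (iteratedDeriv 4 w x * conj (w x)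
      - ((γ - η ^ 2 : ℝ) : ℂ) * (iteratedDeriv 2 w x * conj (w x))
      + 2 * l * ((β * η : ℝ) : ℂ) * (iteratedDeriv 1 w x * conj (w x))
      + l ^ 2 * (w x * conj (w x))) = 0 := by
    rw [integral_congr (g := fun _ => 0) fun x hx => ?_, intervalIntegral.integral_zero]
    rw [uIcc_of_le zero_le_one] at hx
    linear_combination conj (w x) * hode x hx
  rw [intervalIntegral.integral_add, intervalIntegral.integral_add, intervalIntegral.integral_sub,
    intervalIntegral.integral_const_mul, intervalIntegral.integral_const_mul,
    intervalIntegral.integral_const_mul] at hzero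
  all_goals try exact Continuous.intervalIntegrable (by fun_prop) _ _
  rw [hw4.integral_iteratedDeriv_four_mul_conj hw0 hw20,
    (hw4.of_le (by norm_num)).integral_iteratedDeriv_two_mul_conj hw0, integral_mul_conj] at hzero
  push_cast at hzero hbc2 ⊢
  rw [← mul_conj]
  linear_combination hzero - conj (w 1) * hbc2 + conj (iteratedDeriv 1 w 1) * hbc1

end Eigenpair

/-- every eigenvalue of problem (P) lies in the closed left
half-plane. -/
theorem eigenvalue_re_nonpos (β η γ κ : ℝ) (hβ : β ∈ Ioo (0:ℝ) 1) (hη : 0 ≤ η)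
    (hκ : 0 ≤ κ) (hγ : η^2 < γ) (l : ℂ)
    (h : IsEigenvalueP β η γ κ l) : l.re ≤ 0 := by
  obtain ⟨w, hw⟩ := h
  obtain ⟨hw4, ⟨s₀, hs₀, hws₀⟩, -, hw0, -⟩ := id hw
  have hw1 : ContDiff ℝ 1 w := hw4.of_le (by norm_num)
  have hJ : 2 * (∫ x in (0:ℝ)..1, deriv w x * conj (w x)).re = normSq (w 1) := by
    simpa [hw0] using two_mul_re_integral_deriv_mul_conj hw1 0 1
  refine re_nonpos_of_quadratic_eq_zero ?_ ?_ ?_ hw.energy_identity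
  · exact integral_pos zero_lt_one (by fun_prop : Continuous _).continuousOn
      (fun _ _ => normSq_nonneg _) ⟨s₀, hs₀, normSq_pos.2 hws₀⟩
  · have hβη : 2 * β * η * (∫ x in (0:ℝ)..1, deriv w x * conj (w x)).re
        = β * η * normSq (w 1) := by
      rw [← hJ]; ring
    simp only [add_re, ofReal_re, re_ofReal_mul, hβη]
    exact add_nonneg (mul_nonneg hκ (normSq_nonneg _))
      (mul_nonneg (mul_nonneg hβ.1.le hη) (normSq_nonneg _))
  · exact add_nonneg (integral_nonneg zero_le_one fun x _ => normSq_nonneg _)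
      (mul_nonneg (by linarith) (integral_nonneg zero_le_one fun x _ => normSq_nonneg _))
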